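/- arXiv:2011.14002 — 2 statements merged into one kernel-verified Lean document; each statement's English description precedes it below -/
import Mathlib

section
/- Suppose the closed disk D(0, R) of radius R centered at the origin is contained in the prisoner set P(f_{c₁}) of the intact map f_{c₁}(z) = z² + c₁. Then the prisoner set of the mutated map f is contained in P(f_{c₁}), i.e., P(f) ⊆ P(f_{c₁}). -/
/-!
Outside the closed disk `D(0, R)` the mutated map coincides with `z ↦ z² + c₁`, so an orbit of
the mutated map agrees with the intact orbit up to its first visit to `D(0, R)`. If there is no
such visit, the two orbits are equal; otherwise the intact orbit reaches `D(0, R) ⊆ P(f_{c₁})`,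
and a point with a bounded orbit tail has a bounded orbit.
-/

open Set Function Bornology

/-- The mutated map: `z ↦ z² + c₀` on `|z| ≤ r`, a radial interpolation on the
annulus `r < |z| < R`, and `z ↦ z² + c₁` on `|z| ≥ R`. -/
noncomputable def mutatedMap (r R : ℝ) (c₀ c₁ : ℂ) (z : ℂ) : ℂ :=
  if ‖z‖ ≤ r then z ^ 2 + c₀
  else if ‖z‖ < R then
    z ^ 2 + c₀ * (((R - ‖z‖) / (R - r) : ℝ) : ℂ)
      + c₁ * (((‖z‖ - r) / (R - r) : ℝ) : ℂ)
  else z ^ 2 + c₁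

/-- The prisoner set of a map `g : ℂ → ℂ`: points with bounded forward orbit. -/
def prisonerSet (g : ℂ → ℂ) : Set ℂ :=
  {z₀ | Bornology.IsBounded (Set.range fun n : ℕ => g^[n] z₀)}

theorem Function.iterate_eq_of_forall_lt_mem {α : Type*} {f g : α → α} {s : Set α}
    (h : EqOn f g s) {x : α} {n : ℕ} (hn : ∀ k < n, f^[k] x ∈ s) : f^[n] x = g^[n] x := by
  induction n with
  | zero => rfl
  | succ n ih =>
    rw [iterate_succ_apply', iterate_succ_apply', ← ih fun k hk => hn k (by omega)]
    exact h (hn n n.lt_succ_self)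

theorem Bornology.IsBounded.range_iterate_of_iterate {α : Type*} [Bornology α] {g : α → α}
    {x : α} (n : ℕ) (h : IsBounded (range fun m => g^[m] (g^[n] x))) :
    IsBounded (range fun m => g^[m] x) := by
  refine (((finite_Iio n).image fun k => g^[k] x).isBounded.union h).subset ?_
  rintro _ ⟨m, rfl⟩
  rcases lt_or_ge m n with hm | hm
  · exact .inl ⟨m, hm, rfl⟩
  · refine .inr ⟨m - n, ?_⟩
    simp only [← iterate_add_apply, Nat.sub_add_cancel hm]

theorem mem_prisonerSet_of_iterate_mem {g : ℂ → ℂ} {z : ℂ} (n : ℕ)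
    (h : g^[n] z ∈ prisonerSet g) : z ∈ prisonerSet g :=
  IsBounded.range_iterate_of_iterate (g := g) n h

theorem mutatedMap_of_le_norm {r R : ℝ} (hrR : r < R) (c₀ c₁ : ℂ) {z : ℂ} (hz : R ≤ ‖z‖) :
    mutatedMap r R c₀ c₁ z = z ^ 2 + c₁ := by
  rw [mutatedMap, if_neg (by linarith), if_neg (by linarith)]

theorem prisonerSet_subset_of_disk_subset_general (r R : ℝ) (hrR : r < R)
    (c₀ c₁ : ℂ)
    (hD : Metric.closedBall (0 : ℂ) R ⊆ prisonerSet (fun z => z ^ 2 + c₁)) :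
    prisonerSet (mutatedMap r R c₀ c₁) ⊆ prisonerSet (fun z => z ^ 2 + c₁) := by
  intro z₀ hz₀
  have hagree : EqOn (mutatedMap r R c₀ c₁) (fun z => z ^ 2 + c₁) {z | R < ‖z‖} :=
    fun z hz => mutatedMap_of_le_norm hrR c₀ c₁ (le_of_lt hz)
  by_cases hvisit : ∃ n, ‖(mutatedMap r R c₀ c₁)^[n] z₀‖ ≤ R
  · have hfirst : ∀ k < Nat.find hvisit, (mutatedMap r R c₀ c₁)^[k] z₀ ∈ {z | R < ‖z‖} :=
      fun k hk => not_le.1 (Nat.find_min hvisit hk)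
    have hn := Nat.find_spec hvisit
    rw [iterate_eq_of_forall_lt_mem hagree hfirst] at hn
    exact mem_prisonerSet_of_iterate_mem _ (hD (mem_closedBall_zero_iff.2 hn))
  · push Not at hvisit
    have horbit : ∀ n, (mutatedMap r R c₀ c₁)^[n] z₀ = (fun z => z ^ 2 + c₁)^[n] z₀ :=
      fun n => iterate_eq_of_forall_lt_mem hagree fun k _ => hvisit k
    simpa only [prisonerSet, mem_ofPred_eq, horbit] using hz₀

theorem prisonerSet_subset_of_disk_subset (r R : ℝ) (hr : 0 ≤ r) (hrR : r < R)
    (c₀ c₁ : ℂ)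
    (hD : Metric.closedBall (0 : ℂ) R ⊆ prisonerSet (fun z => z ^ 2 + c₁)) :
    prisonerSet (mutatedMap r R c₀ c₁) ⊆ prisonerSet (fun z => z ^ 2 + c₁) :=
  prisonerSet_subset_of_disk_subset_general r R hrR c₀ c₁ hD
end

section
/- If the mutation radius r satisfies r ≥ M (so that the mutated map equals f_{c₀}(z) = z² + c₀ on the whole disk |z| ≤ M), then the prisoner set of the mutated map f coincides with the prisoner set of the pure mutation map: P(f) = P(f_{c₀}). -/
open Function Metric Set Bornology

theorem iterate_eq_of_eqOn {α : Type*} {f g : α → α} {s : Set α} (h : EqOn f g s) {z : α} :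
    ∀ n, (∀ k < n, g^[k] z ∈ s) → f^[n] z = g^[n] z
  | 0, _ => rfl
  | n + 1, hs => by
    rw [iterate_succ_apply', iterate_succ_apply',
      iterate_eq_of_eqOn h n fun k hk => hs k (Nat.lt_succ_of_lt hk)]
    exact h (hs n n.lt_succ_self)

theorem forall_iterate_mem_iff_of_eqOn {α : Type*} {f g : α → α} {s : Set α} (h : EqOn f g s)
    (z : α) : (∀ n, f^[n] z ∈ s) ↔ ∀ n, g^[n] z ∈ s :=
  ⟨fun hf n => iterate_eq_of_eqOn h.symm n (fun k _ => hf k) ▸ hf n,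
    fun hg n => iterate_eq_of_eqOn h n (fun k _ => hg k) ▸ hg n⟩

section Escape

variable {E : Type*} [SeminormedAddCommGroup E] {g : E → E} {M : ℝ}

theorem add_le_norm_iterate (hg : ∀ z, M ≤ ‖z‖ → ‖z‖ + 1 ≤ ‖g z‖) {w : E} (hw : M ≤ ‖w‖) :
    ∀ n : ℕ, ‖w‖ + n ≤ ‖g^[n] w‖
  | 0 => by simp
  | n + 1 => by
    have ih := add_le_norm_iterate hg hw n
    rw [iterate_succ_apply']
    have := hg _ (by linarith [(Nat.cast_nonneg n : (0 : ℝ) ≤ n)])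
    push_cast
    linarith

theorem isBounded_range_iterate_iff (hg : ∀ z, M ≤ ‖z‖ → ‖z‖ + 1 ≤ ‖g z‖) (z : E) :
    IsBounded (range fun n : ℕ => g^[n] z) ↔ ∀ n, g^[n] z ∈ ball 0 M := by
  refine ⟨fun hb n => ?_, fun h => isBounded_ball.subset (range_subset_iff.2 h)⟩
  by_contra hn
  rw [mem_ball_zero_iff, not_lt] at hn
  obtain ⟨C, hC⟩ := isBounded_iff_forall_norm_le.1 hb
  obtain ⟨m, hm⟩ := exists_nat_gt C
  have hgrow := add_le_norm_iterate hg hn m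
  rw [← iterate_add_apply] at hgrow
  linarith [hC _ ⟨m + n, rfl⟩, norm_nonneg (g^[n] z)]

end Escape

/-- At `t = 1 + √(1 + K)` one has `t² - K - (t + 1) = √(1 + K) ≥ 0`, and the left side increases
for `t ≥ 1`. -/
theorem add_one_le_norm_of_norm_sub_sq_le {𝕜 : Type*} [NormedDivisionRing 𝕜] {g : 𝕜 → 𝕜}
    {K : ℝ} (hg : ∀ z, ‖g z - z ^ 2‖ ≤ K) (z : 𝕜) (hz : 1 + √(1 + K) ≤ ‖z‖) :
    ‖z‖ + 1 ≤ ‖g z‖ := by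
  have hK : 0 ≤ K := (norm_nonneg _).trans (hg 0)
  have hs : √(1 + K) ^ 2 = 1 + K := Real.sq_sqrt (by linarith)
  have hs₀ := Real.sqrt_nonneg (1 + K)
  have hsq : ‖z‖ ^ 2 - K ≤ ‖g z‖ := by
    have := norm_sub_norm_le (z ^ 2) (z ^ 2 - g z)
    rw [sub_sub_cancel, norm_sub_rev, norm_pow] at this
    linarith [hg z]
  nlinarith

theorem norm_mutatedMap_sub_sq_le (r R : ℝ) (c₀ c₁ z : ℂ) :
    ‖mutatedMap r R c₀ c₁ z - z ^ 2‖ ≤ ‖c₀‖ + ‖c₁‖ := by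
  unfold mutatedMap
  split_ifs with hr hR
  · simp
  · rw [not_le] at hr
    have hRr : 0 < R - r := by linarith
    have hw₀ : |(R - ‖z‖) / (R - r)| ≤ 1 := by
      rw [abs_div, abs_of_pos (by linarith), abs_of_pos hRr, div_le_one hRr]
      linarith
    have hw₁ : |(‖z‖ - r) / (R - r)| ≤ 1 := by
      rw [abs_div, abs_of_pos (by linarith), abs_of_pos hRr, div_le_one hRr]
      linarith
    calc _ = ‖c₀ * (((R - ‖z‖) / (R - r) : ℝ) : ℂ) + c₁ * (((‖z‖ - r) / (R - r) : ℝ) : ℂ)‖ := by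
          ring_nf
      _ ≤ ‖c₀‖ * |(R - ‖z‖) / (R - r)| + ‖c₁‖ * |(‖z‖ - r) / (R - r)| := by
          refine (norm_add_le _ _).trans_eq ?_
          simp only [norm_mul, Complex.norm_real, Real.norm_eq_abs]
      _ ≤ ‖c₀‖ + ‖c₁‖ := add_le_add (mul_le_of_le_one_right (norm_nonneg _) hw₀)
          (mul_le_of_le_one_right (norm_nonneg _) hw₁)
  · simp

theorem mutatedMap_eqOn_closedBall (r R : ℝ) (c₀ c₁ : ℂ) :
    EqOn (mutatedMap r R c₀ c₁) (fun z => z ^ 2 + c₀) (closedBall 0 r) := fun z hz => by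
  rw [mem_closedBall_zero_iff] at hz
  simp only [mutatedMap, if_pos hz]

theorem prisonerSet_eq_of_large_mutation_radius_general (r R : ℝ)
    (c₀ c₁ : ℂ)
    (M : ℝ) (hM : M = 1 + Real.sqrt (1 + (‖c₀‖ + ‖c₁‖)))
    (hrM : M ≤ r) :
    prisonerSet (mutatedMap r R c₀ c₁) = prisonerSet (fun z => z ^ 2 + c₀) := by
  have hclose : ∀ z : ℂ, ‖(z ^ 2 + c₀) - z ^ 2‖ ≤ ‖c₀‖ + ‖c₁‖ := fun z => by simp
  have hmut := add_one_le_norm_of_norm_sub_sq_le (norm_mutatedMap_sub_sq_le r R c₀ c₁)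
  have hpure := add_one_le_norm_of_norm_sub_sq_le hclose
  subst hM
  ext z
  simp only [prisonerSet, mem_ofPred_eq, isBounded_range_iterate_iff hmut,
    isBounded_range_iterate_iff hpure]
  exact forall_iterate_mem_iff_of_eqOn
    ((mutatedMap_eqOn_closedBall r R c₀ c₁).mono (ball_subset_closedBall.trans
      (closedBall_subset_closedBall hrM))) z

theorem prisonerSet_eq_of_large_mutation_radius (r R : ℝ) (hr : 0 ≤ r) (hrR : r < R)
    (c₀ c₁ : ℂ)
    (M : ℝ) (hM : M = 1 + Real.sqrt (1 + (‖c₀‖ + ‖c₁‖)))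
    (hrM : M ≤ r) :
    prisonerSet (mutatedMap r R c₀ c₁) = prisonerSet (fun z => z ^ 2 + c₀) :=
  prisonerSet_eq_of_large_mutation_radius_general r R c₀ c₁ M hM hrM
end
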